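/- If a chain code U satisfies qturn(P) ∈ {-1, 0, 1} for every prefix P, then every point of its unfolding dual path with the same y-coordinate as the final point lies within horizontal distance equal to the length of the final horizontal run; in particular, for each integer y, the set of path points at height y forms a set of consecutive lattice points on a horizontal line. -/

import Mathlib

inductive TurnSym : Type
  | L | R | S
deriving DecidableEq

def qt : TurnSym → ℤ
  | TurnSym.L => -1
  | TurnSym.R => 1
  | TurnSym.S => 0

def qturn (U : List TurnSym) : ℤ := (U.map qt).sum

def rot : TurnSym → ℤ × ℤ → ℤ × ℤ
  | TurnSym.R, d => (d.2, -d.1)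
  | TurnSym.L, d => (-d.2, d.1)
  | TurnSym.S, d => d

def pathStep (s : (ℤ × ℤ) × (ℤ × ℤ)) (a : TurnSym) : (ℤ × ℤ) × (ℤ × ℤ) :=
  let d := rot a s.2
  (s.1 + d, d)

/-- Points p_0 = (0,0), p_1 = (0,1), ..., p_{n+1} of the unfolding dual path. -/
def pts (U : List TurnSym) : List (ℤ × ℤ) :=
  (0, 0) :: (List.scanl pathStep ((0, 1), (0, 1)) U).map Prod.fst

/-- 90° clockwise rotation. -/
def cw (d : ℤ × ℤ) : ℤ × ℤ := (d.2, -d.1)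

/-- Final heading after processing a chain code from initial heading (0,1). -/
def headAfter (U : List TurnSym) : ℤ × ℤ := U.foldl (fun d a => rot a d) (0, 1)

/-- Reflection of a chain code: swap L and R. -/
def reflCode (U : List TurnSym) : List TurnSym :=
  U.map fun a => match a with
    | TurnSym.L => TurnSym.R
    | TurnSym.R => TurnSym.L
    | TurnSym.S => TurnSym.S

/-- Action of a chain code on an arbitrary initial heading. -/
def act (U : List TurnSym) (d : ℤ × ℤ) : ℤ × ℤ := U.foldl (fun d a => rot a d) d

/-!
The prefix condition keeps the heading in {left, up, right}, so the path never moves down and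
every row it visits is entered once, from below. Within a row the heading cannot switch between
left and right, since qturn would have to pass through 0, i.e. an up step, which leaves the row.
Hence each row is traversed by a single horizontal run, which is an interval. The induction runs
from the end of the code: prepending a point to the path either opens a new lowest row
or extends the interval of the current row at the end the path leaves from.
-/

open Set

/-- Under the prefix hypothesis the heading after a prefix `P` is `dir (qturn P)`: the path only
ever moves left, up or right. -/
def dir (q : ℤ) : ℤ × ℤ := if q = 1 then (1, 0) else if q = -1 then (-1, 0) else (0, 1)

lemma rot_dir {a : TurnSym} {q : ℤ} (hq : q ∈ ({-1, 0, 1} : Set ℤ))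
    (hq' : q + qt a ∈ ({-1, 0, 1} : Set ℤ)) : rot a (dir q) = dir (q + qt a) := by
  simp only [mem_insert_iff, mem_singleton_iff] at hq hq'
  cases a <;> rcases hq with rfl | rfl | rfl <;> simp_all [rot, dir, qt]

def QturnBounded (q : ℤ) (U : List TurnSym) : Prop :=
  ∀ P, P <+: U → q + qturn P ∈ ({-1, 0, 1} : Set ℤ)

lemma QturnBounded.mem {q : ℤ} {U : List TurnSym} (h : QturnBounded q U) :
    q ∈ ({-1, 0, 1} : Set ℤ) := by
  simpa [qturn] using h [] List.nil_prefix

lemma QturnBounded.tail {q : ℤ} {a : TurnSym} {U : List TurnSym}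
    (h : QturnBounded q (a :: U)) : QturnBounded (q + qt a) U := fun P hP => by
  simpa [qturn, add_assoc] using h (a :: P) (List.cons_prefix_cons.mpr ⟨rfl, hP⟩)

def ptsFrom (s : (ℤ × ℤ) × (ℤ × ℤ)) (U : List TurnSym) : List (ℤ × ℤ) :=
  (List.scanl pathStep s U).map Prod.fst

lemma ptsFrom_cons (s : (ℤ × ℤ) × (ℤ × ℤ)) (a : TurnSym) (U : List TurnSym) :
    ptsFrom s (a :: U) = s.1 :: ptsFrom (pathStep s a) U := by
  simp [ptsFrom, List.scanl_cons]

lemma pts_eq_cons_ptsFrom (U : List TurnSym) :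
    pts U = (0, 0) :: ptsFrom ((0, 1), dir 0) U := by
  simp [pts, ptsFrom, dir]

def row (l : List (ℤ × ℤ)) (y : ℤ) : Set ℤ := {x | (x, y) ∈ l}

lemma row_cons_of_ne {p : ℤ × ℤ} {l : List (ℤ × ℤ)} {y : ℤ} (hy : y ≠ p.2) :
    row (p :: l) y = row l y := by
  ext x
  simp [row, Prod.ext_iff, hy]

lemma row_cons_self (p : ℤ × ℤ) (l : List (ℤ × ℤ)) :
    row (p :: l) p.2 = insert p.1 (row l p.2) := by
  ext x
  simp [row, Prod.ext_iff]

lemma row_eq_empty_of_forall_lt {l : List (ℤ × ℤ)} {y : ℤ} (h : ∀ z ∈ l, y < z.2) :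
    row l y = ∅ :=
  eq_empty_of_forall_notMem fun _ hx => (h _ hx).false

/-- `l` is the path from `p` on, where `p` was entered with heading `dir q`; a path entering `p`
rightwards can never turn back left in the row of `p`, and vice versa. -/
structure RowInvariant (q : ℤ) (p : ℤ × ℤ) (l : List (ℤ × ℤ)) : Prop where
  above : ∀ z ∈ l, p.2 ≤ z.2
  rows : ∀ y, ∃ a b, row l y = Icc a b
  right : q = 1 → ∃ b, p.1 ≤ b ∧ row l p.2 = Icc p.1 b
  left : q = -1 → ∃ a, a ≤ p.1 ∧ row l p.2 = Icc a p.1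

section cons

variable {q q' : ℤ} {p : ℤ × ℤ} {l : List (ℤ × ℤ)}

lemma RowInvariant.rows_cons {p' : ℤ × ℤ} (h : RowInvariant q' p' l) {a b : ℤ}
    (hrow : row (p :: l) p.2 = Icc a b) : ∀ y, ∃ a b, row (p :: l) y = Icc a b := by
  intro y
  rcases eq_or_ne y p.2 with rfl | hy
  · exact ⟨a, b, hrow⟩
  · simpa [row_cons_of_ne hy] using h.rows y

lemma RowInvariant.cons_up (h : RowInvariant q' (p.1, p.2 + 1) l) :
    RowInvariant q p (p :: l) := by
  have hrow : row (p :: l) p.2 = Icc p.1 p.1 := by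
    rw [row_cons_self, row_eq_empty_of_forall_lt fun z hz => by linarith [h.above z hz]]
    simp
  exact ⟨List.forall_mem_cons.mpr ⟨le_rfl, fun z hz => (h.above z hz).trans' (by simp)⟩,
    h.rows_cons hrow, fun _ => ⟨p.1, le_rfl, hrow⟩, fun _ => ⟨p.1, le_rfl, hrow⟩⟩

lemma RowInvariant.cons_right (h : RowInvariant 1 (p.1 + 1, p.2) l) (hq : q ≠ -1) :
    RowInvariant q p (p :: l) := by
  obtain ⟨b, hb, hrowl⟩ := h.right rfl
  have hrow : row (p :: l) p.2 = Icc p.1 b := by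
    rw [row_cons_self, hrowl, insert_Icc_add_one_left_eq_Icc (by linarith)]
  exact ⟨List.forall_mem_cons.mpr ⟨le_rfl, h.above⟩, h.rows_cons hrow,
    fun _ => ⟨b, by linarith, hrow⟩, fun hq' => absurd hq' hq⟩

lemma RowInvariant.cons_left (h : RowInvariant (-1) (p.1 - 1, p.2) l) (hq : q ≠ 1) :
    RowInvariant q p (p :: l) := by
  obtain ⟨a, ha, hrowl⟩ := h.left rfl
  have hrow : row (p :: l) p.2 = Icc a p.1 := by
    rw [row_cons_self, hrowl, insert_Icc_sub_one_right_eq_Icc (by linarith)]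
  exact ⟨List.forall_mem_cons.mpr ⟨le_rfl, h.above⟩, h.rows_cons hrow,
    fun hq' => absurd hq' hq, fun _ => ⟨a, by linarith, hrow⟩⟩

end cons

lemma rowInvariant_singleton (q : ℤ) (p : ℤ × ℤ) : RowInvariant q p [p] := by
  have hrow : row [p] p.2 = Icc p.1 p.1 := by
    rw [row_cons_self, row_eq_empty_of_forall_lt (by simp)]
    simp
  have hrows : ∀ y, ∃ a b, row [p] y = Icc a b := fun y => by
    rcases eq_or_ne y p.2 with rfl | hy
    · exact ⟨_, _, hrow⟩
    · exact ⟨1, 0, by rw [row_cons_of_ne hy, row_eq_empty_of_forall_lt (by simp)]; simp⟩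
  exact ⟨by simp, hrows, fun _ => ⟨p.1, le_rfl, hrow⟩, fun _ => ⟨p.1, le_rfl, hrow⟩⟩

theorem rowInvariant_ptsFrom (U : List TurnSym) (q : ℤ) (p : ℤ × ℤ) (h : QturnBounded q U) :
    RowInvariant q p (ptsFrom (p, dir q) U) := by
  induction U generalizing q p with
  | nil => exact rowInvariant_singleton q p
  | cons a U ih =>
    obtain ⟨x, y⟩ := p
    have hqa : qt a ∈ ({-1, 0, 1} : Set ℤ) := by cases a <;> simp [qt]
    have ih' := ih (q + qt a) ((x, y) + dir (q + qt a)) h.tail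
    rw [ptsFrom_cons, pathStep, rot_dir h.mem h.tail.mem]
    have hq' := h.tail.mem
    simp only [mem_insert_iff, mem_singleton_iff] at hq' hqa
    rcases hq' with hq' | hq' | hq' <;> rw [hq'] at ih' ⊢ <;>
      norm_num [dir, ← sub_eq_add_neg] at ih' ⊢
    · exact ih'.cons_left (by omega)
    · exact ih'.cons_up
    · exact ih'.cons_right (by omega)

theorem stmt15 (U : List TurnSym)
    (h : ∀ P, P <+: U → qturn P ∈ ({-1, 0, 1} : Set ℤ)) :
    ∀ y : ℤ, ∃ a b : ℤ, {x : ℤ | (x, y) ∈ pts U} = Set.Icc a b := by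
  have hU : QturnBounded 0 U := fun P hP => by simpa using h P hP
  rw [pts_eq_cons_ptsFrom]
  exact ((rowInvariant_ptsFrom U 0 (0, 1) hU).cons_up (p := (0, 0)) (q := 0)).rows
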